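/- Let ρ₁, ρ₂, ρ₃ be density matrices on a finite-dimensional Hilbert space H, with unitaries U, V, W satisfying |√ρ₂ √ρ₁| = U √ρ₂ √ρ₁, |√ρ₃ √ρ₁| = V √ρ₃ √ρ₁, |√ρ₃ √ρ₂| = W √ρ₃ √ρ₂ (polar decompositions), and suppose V = U W. Let p₁, p₂, p₃ > 0 with Σ p_i = 1. Then the 3×3 block matrix ρ_AB whose (i,j) block is √(p_i p_j) √ρ_i X_{ij} √ρ_j, where X_{11}=X_{22}=X_{33}=1, X_{12}=U, X_{13}=V, X_{23}=W, X_{ji}=X_{ij}†, is positive semi-definite with trace 1. -/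

import Mathlib

open Matrix Kronecker Finset ComplexOrder

noncomputable section
open scoped Classical

/-- Square root of a matrix: the PSD square root if the matrix is PSD, else 0. -/
def mSqrt {m : Type*} [Fintype m] [DecidableEq m] (A : Matrix m m ℂ) : Matrix m m ℂ :=

  if h : A.PosSemidef then h.1.eigenvectorUnitary.1 * diagonal ((↑) ∘ (Real.sqrt ·) ∘ h.1.eigenvalues) *
    (star h.1.eigenvectorUnitary : Matrix m m ℂ) else 0

/-- Operator absolute value `|A| = √(Aᴴ A)`. -/
def mAbs {m : Type*} [Fintype m] [DecidableEq m] (A : Matrix m m ℂ) : Matrix m m ℂ :=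
  (Matrix.posSemidef_conjTranspose_mul_self A).1.eigenvectorUnitary.1 *
    diagonal ((↑) ∘ (Real.sqrt ·) ∘ (Matrix.posSemidef_conjTranspose_mul_self A).1.eigenvalues) *
    (star (Matrix.posSemidef_conjTranspose_mul_self A).1.eigenvectorUnitary : Matrix m m ℂ)

/-- Von Neumann entropy (base-2), via eigenvalues of a Hermitian matrix. -/
def vnEntropy {m : Type*} [Fintype m] [DecidableEq m] (ρ : Matrix m m ℂ) : ℝ :=
  if h : ρ.IsHermitian then -∑ i, (h.eigenvalues i) * Real.logb 2 (h.eigenvalues i) else 0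

/-- Partial trace over the first tensor factor. -/
def ptraceA {m p : Type*} [Fintype m] [Fintype p] (X : Matrix (m × p) (m × p) ℂ) :
    Matrix p p ℂ := Matrix.of fun a b => ∑ k, X (k, a) (k, b)

/-- Partial trace over the second tensor factor. -/
def ptraceB {m p : Type*} [Fintype m] [Fintype p] (X : Matrix (m × p) (m × p) ℂ) :
    Matrix m m ℂ := Matrix.of fun a b => ∑ k, X (a, k) (b, k)

/-- Fidelity `F(ρ,σ) = (Tr |√ρ √σ|)²`. -/
def fidelity {m : Type*} [Fintype m] [DecidableEq m] (ρ σ : Matrix m m ℂ) : ℝ :=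
  ((mAbs (mSqrt ρ * mSqrt σ)).trace.re) ^ 2

/-!
With `c = (1, U, U W)` and `U`, `W` unitary, the middle matrix `M` has entries `M i j = c iᴴ * c j`.
Hence `ρAB` is the Gram matrix `Bᴴ B` of the block row `B = (A 0 | A 1 | A 2)` with
`A i = √(p i) • c i * √(ρ i)`, so it is positive semidefinite, and its diagonal blocks are
`p i • ρ i`, so its trace is `∑ p i = 1`.
-/

open scoped MatrixOrder in
theorem mSqrt_eq_sqrt {m : Type*} [Fintype m] [DecidableEq m] {A : Matrix m m ℂ}
    (hA : A.PosSemidef) : mSqrt A = CFC.sqrt A := by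
  rw [CFC.sqrt_eq_real_sqrt A hA.nonneg, cfcₙ_eq_cfc, hA.1.cfc_eq, mSqrt, dif_pos hA]
  rfl

open scoped MatrixOrder in
theorem mSqrt_mul_self {m : Type*} [Fintype m] [DecidableEq m] {A : Matrix m m ℂ}
    (hA : A.PosSemidef) : mSqrt A * mSqrt A = A := by
  rw [mSqrt_eq_sqrt hA]
  exact CFC.sqrt_mul_sqrt_self A hA.nonneg

open scoped MatrixOrder in
theorem isHermitian_mSqrt {m : Type*} [Fintype m] [DecidableEq m] {A : Matrix m m ℂ}
    (hA : A.PosSemidef) : (mSqrt A).IsHermitian := by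
  rw [mSqrt_eq_sqrt hA]
  exact (CFC.sqrt_nonneg A).isSelfAdjoint

namespace Matrix

variable {R ι m n : Type*} [Fintype ι] [Fintype n]

theorem trace_comp [AddCommMonoid R] (M : Matrix ι ι (Matrix n n R)) :
    (comp ι ι n n R M).trace = ∑ i, (M i i).trace := by
  simp only [trace, Fintype.sum_prod_type, diag_apply, comp_apply]

theorem posSemidef_comp_conjTranspose_mul_self [Fintype m] [CommRing R] [PartialOrder R]
    [StarRing R] [StarOrderedRing R] (A : ι → Matrix m n R) :
    (comp ι ι n n R (of fun i j => (A i)ᴴ * A j)).PosSemidef := by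
  have hgram : comp ι ι n n R (of fun i j => (A i)ᴴ * A j) =
      (of fun k x => A x.1 k x.2 : Matrix m (ι × n) R)ᴴ * of fun k x => A x.1 k x.2 := by
    ext x y
    simp [mul_apply]
  rw [hgram]
  exact posSemidef_conjTranspose_mul_self _

end Matrix

theorem unitary_blockMatrix_eq_star_mul {R : Type*} [Monoid R] [StarMul R] {U W : R}
    (hU : U ∈ unitary R) (hW : W ∈ unitary R) (i j : Fin 3) :
    ![![1, U, U * W], ![star U, 1, W], ![star (U * W), star W, 1]] i j =
      star (![1, U, U * W] i) * ![1, U, U * W] j := by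
  have hU' (x : R) : star U * (U * x) = x := by
    rw [← mul_assoc, Unitary.star_mul_self_of_mem hU, one_mul]
  fin_cases i <;> fin_cases j <;>
    simp [star_mul, mul_assoc, hU', Unitary.star_mul_self_of_mem hU, Unitary.star_mul_self_of_mem hW]

theorem stmt10_general (n : ℕ)
(ρ : Fin 3 → Matrix (Fin n) (Fin n) ℂ)
    (hρ : ∀ i, (ρ i).PosSemidef ∧ (ρ i).trace = 1)
    (p : Fin 3 → ℝ) (hp : ∀ i, 0 < p i) (hpsum : ∑ i, p i = 1)
    (U V W : Matrix (Fin n) (Fin n) ℂ)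
    (hU : U ∈ Matrix.unitaryGroup (Fin n) ℂ)
    (hW : W ∈ Matrix.unitaryGroup (Fin n) ℂ)
    (hVUW : V = U * W)
    (ρAB : Matrix (Fin 3 × Fin n) (Fin 3 × Fin n) ℂ)
    (hρAB : ρAB = Matrix.of fun x y : Fin 3 × Fin n =>
      (Real.sqrt (p x.1 * p y.1) : ℂ) *
        (mSqrt (ρ x.1) *
          (![![(1 : Matrix (Fin n) (Fin n) ℂ), U, V], ![Uᴴ, 1, W], ![Vᴴ, Wᴴ, 1]] x.1 y.1) *
          mSqrt (ρ y.1)) x.2 y.2) :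
    ρAB.PosSemidef ∧ ρAB.trace = 1 := by
  subst hVUW
  let c : Fin 3 → Matrix (Fin n) (Fin n) ℂ := ![1, U, U * W]
  have hM i j : ![![1, U, U * W], ![Uᴴ, 1, W], ![(U * W)ᴴ, Wᴴ, 1]] i j = (c i)ᴴ * c j :=
    unitary_blockMatrix_eq_star_mul hU hW i j
  let A i : Matrix (Fin n) (Fin n) ℂ := (√(p i) : ℂ) • (c i * mSqrt (ρ i))
  have hA i j : (A i)ᴴ * A j = (√(p i * p j) : ℂ) • (mSqrt (ρ i) * ((c i)ᴴ * c j) * mSqrt (ρ j)) := by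
    simp only [A, conjTranspose_smul, conjTranspose_mul, (isHermitian_mSqrt (hρ i).1).eq,
      smul_mul_smul_comm, Real.sqrt_mul (hp i).le, Complex.ofReal_mul, Complex.star_def,
      Complex.conj_ofReal, mul_assoc]
  have hgram : ρAB = comp _ _ _ _ _ (of fun i j => (A i)ᴴ * A j) := by
    ext x y
    simp only [hρAB, comp_apply, of_apply, hA, ← hM, Matrix.smul_apply, smul_eq_mul]
  refine ⟨hgram ▸ posSemidef_comp_conjTranspose_mul_self A, ?_⟩
  have hdiag i : ((A i)ᴴ * A i).trace = p i := by
    have hc : (c i)ᴴ * c i = 1 := by rw [← hM]; fin_cases i <;> rfl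
    rw [hA, hc, mul_one, mSqrt_mul_self (hρ i).1, trace_smul, (hρ i).2,
      Real.sqrt_mul_self (hp i).le, smul_eq_mul, mul_one]
  rw [hgram, trace_comp]
  simp only [of_apply, hdiag]
  exact_mod_cast hpsum

/-- The block matrix with blocks √(pᵢpⱼ) √ρᵢ Xᵢⱼ √ρⱼ (with V = UW) is a density matrix. -/
theorem stmt10 (n : ℕ)
(ρ : Fin 3 → Matrix (Fin n) (Fin n) ℂ)
    (hρ : ∀ i, (ρ i).PosSemidef ∧ (ρ i).trace = 1)
    (p : Fin 3 → ℝ) (hp : ∀ i, 0 < p i) (hpsum : ∑ i, p i = 1)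
    (U V W : Matrix (Fin n) (Fin n) ℂ)
    (hU : U ∈ Matrix.unitaryGroup (Fin n) ℂ)
    (hV : V ∈ Matrix.unitaryGroup (Fin n) ℂ)
    (hW : W ∈ Matrix.unitaryGroup (Fin n) ℂ)
    (hpolU : mAbs (mSqrt (ρ 1) * mSqrt (ρ 0)) = U * (mSqrt (ρ 1) * mSqrt (ρ 0)))
    (hpolV : mAbs (mSqrt (ρ 2) * mSqrt (ρ 0)) = V * (mSqrt (ρ 2) * mSqrt (ρ 0)))
    (hpolW : mAbs (mSqrt (ρ 2) * mSqrt (ρ 1)) = W * (mSqrt (ρ 2) * mSqrt (ρ 1)))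
    (hVUW : V = U * W)
    (ρAB : Matrix (Fin 3 × Fin n) (Fin 3 × Fin n) ℂ)
    (hρAB : ρAB = Matrix.of fun x y : Fin 3 × Fin n =>
      (Real.sqrt (p x.1 * p y.1) : ℂ) *
        (mSqrt (ρ x.1) *
          (![![(1 : Matrix (Fin n) (Fin n) ℂ), U, V], ![Uᴴ, 1, W], ![Vᴴ, Wᴴ, 1]] x.1 y.1) *
          mSqrt (ρ y.1)) x.2 y.2) :
    ρAB.PosSemidef ∧ ρAB.trace = 1 :=
  stmt10_general n ρ hρ p hp hpsum U V W hU hW hVUW ρAB hρAB
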